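/- Fix a real number a ≠ 0 and let G be the subgroup of isometries of ℝ³ generated by the four maps R₀(x,y,z) = (−z, −y + a, −x), R₁(x,y,z) = (y, x, z), R̂₂(x,y,z) = (−x, y, z), R̃₂(x,y,z) = (x, y, −z). Then the orbit of the origin under G (the vertex set of the regular complex K₅(1,2)) equals aℤ³ \ ((0,0,a) + aΛ_{(1,1,1)}); explicitly, it is the set of points (am₁, am₂, am₃) with m₁, m₂, m₃ ∈ ℤ such that it is NOT the case that m₁ ≡ m₂ (mod 2) and m₃ ≡ m₁ + 1 (mod 2). -/

import Mathlib

/- STATEMENT 14: For a ≠ 0, the orbit of the origin under the group generated by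
R₀(x,y,z) = (−z, −y + a, −x), R₁(x,y,z) = (y, x, z), R̂₂(x,y,z) = (−x, y, z),
R̃₂(x,y,z) = (x, y, −z) (the vertex set of K₅(1,2)) equals
aℤ³ \ ((0,0,a) + aΛ_{(1,1,1)}): the points (am₁, am₂, am₃), mᵢ ∈ ℤ, such that it is NOT
the case that m₁ ≡ m₂ (mod 2) and m₃ ≡ m₁ + 1 (mod 2). -/

noncomputable section

abbrev E3 : Type := EuclideanSpace ℝ (Fin 3)

def pt (x y z : ℝ) : E3 := WithLp.toLp 2 ![x, y, z]

/-!
In lattice coordinates `(a m₁, a m₂, a m₃)` the generators act on `ℤ³` by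
`m ↦ (-m₃, 1 - m₂, -m₁)`, the swap of `m₁, m₂`, and the sign changes of `m₁` and of `m₃`; each
of these preserves the parity condition, so the orbit of the origin lies in the claimed set.
Conversely `R₀` conjugates the sign changes into each other and composes with them to
translations by `2a` along the axes, so the orbit is a union of classes modulo `2aℤ³`, and the
six admissible parity classes are reached from the origin by short words in the generators.
-/

open Set Function

@[simp] lemma pt_apply_zero (x y z : ℝ) : pt x y z 0 = x := rfl
@[simp] lemma pt_apply_one (x y z : ℝ) : pt x y z 1 = y := rfl
@[simp] lemma pt_apply_two (x y z : ℝ) : pt x y z 2 = z := rfl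

@[simp] lemma pt_eta (x : E3) : pt (x 0) (x 1) (x 2) = x := by
  ext i
  fin_cases i <;> rfl

lemma eq_pt_iff {y : E3} {u v w : ℝ} : y = pt u v w ↔ y 0 = u ∧ y 1 = v ∧ y 2 = w := by
  refine ⟨by rintro rfl; simp, fun ⟨h0, h1, h2⟩ => ?_⟩
  ext i
  fin_cases i <;> assumption

def IsVertexIndex (m1 m2 m3 : ℤ) : Prop := ¬ (m1 ≡ m2 [ZMOD 2] ∧ m3 ≡ m1 + 1 [ZMOD 2])

structure ClosedUnderMoves (P : ℤ → ℤ → ℤ → Prop) : Prop where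
  halfTurn : ∀ {m1 m2 m3}, P m1 m2 m3 → P (-m3) (1 - m2) (-m1)
  swap : ∀ {m1 m2 m3}, P m1 m2 m3 → P m2 m1 m3
  neg_fst : ∀ {m1 m2 m3}, P m1 m2 m3 → P (-m1) m2 m3

namespace ClosedUnderMoves

variable {P : ℤ → ℤ → ℤ → Prop} {m1 m2 m3 : ℤ}

lemma neg_snd (hP : ClosedUnderMoves P) (h : P m1 m2 m3) : P m1 (-m2) m3 :=
  hP.swap (hP.neg_fst (hP.swap h))

lemma neg_thd (hP : ClosedUnderMoves P) (h : P m1 m2 m3) : P m1 m2 (-m3) := by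
  simpa using hP.halfTurn (hP.neg_fst (hP.halfTurn h))

lemma add_two_snd (hP : ClosedUnderMoves P) (h : P m1 m2 m3) : P m1 (m2 + 2) m3 := by
  convert hP.halfTurn (hP.neg_snd (hP.halfTurn (hP.neg_snd h))) using 2 <;> ring

lemma add_two_mul_snd (hP : ClosedUnderMoves P) (k : ℤ) (h : P m1 m2 m3) :
    P m1 (m2 + 2 * k) m3 := by
  induction k using Int.induction_on with
  | zero => simpa using h
  | succ k ih =>
    rw [show m2 + 2 * (k + 1) = m2 + 2 * k + 2 by ring]
    exact hP.add_two_snd ih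
  | pred k ih =>
    rw [show m2 + 2 * (-k - 1) = -(-(m2 + 2 * -k) + 2) by ring]
    exact hP.neg_snd (hP.add_two_snd (hP.neg_snd ih))

lemma add_two_mul_fst (hP : ClosedUnderMoves P) (k : ℤ) (h : P m1 m2 m3) :
    P (m1 + 2 * k) m2 m3 :=
  hP.swap (hP.add_two_mul_snd k (hP.swap h))

lemma add_two_mul_thd (hP : ClosedUnderMoves P) (k : ℤ) (h : P m1 m2 m3) :
    P m1 m2 (m3 + 2 * k) := by
  convert hP.halfTurn (hP.add_two_mul_fst (-k) (hP.halfTurn h)) using 2 <;> ring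

lemma of_emod_two (hP : ClosedUnderMoves P) (h : P (m1 % 2) (m2 % 2) (m3 % 2)) :
    P m1 m2 m3 := by
  have := hP.add_two_mul_thd (m3 / 2) <| hP.add_two_mul_snd (m2 / 2) <|
    hP.add_two_mul_fst (m1 / 2) h
  simpa only [Int.emod_add_mul_ediv] using this

lemma of_isVertexIndex (hP : ClosedUnderMoves P) (h0 : P 0 0 0) (hm : IsVertexIndex m1 m2 m3) :
    P m1 m2 m3 := by
  have p010 : P 0 1 0 := by simpa using hP.halfTurn h0
  have p011 : P 0 1 1 := by simpa using hP.neg_thd (hP.halfTurn (hP.swap p010))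
  have p111 : P 1 1 1 := by
    simpa using hP.neg_thd (hP.neg_fst (hP.halfTurn (hP.swap p011)))
  apply hP.of_emod_two
  unfold IsVertexIndex Int.ModEq at hm
  rcases Int.emod_two_eq_zero_or_one m1 with h1 | h1 <;>
    rcases Int.emod_two_eq_zero_or_one m2 with h2 | h2 <;>
    rcases Int.emod_two_eq_zero_or_one m3 with h3 | h3 <;>
    rw [h1, h2, h3]
  all_goals first
    | assumption | exact hP.swap p010 | exact hP.swap p011 | omega

end ClosedUnderMoves

lemma isVertexIndex_closedUnderMoves : ClosedUnderMoves IsVertexIndex := by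
  refine ⟨?_, ?_, ?_⟩ <;> intro m1 m2 m3 <;> unfold IsVertexIndex Int.ModEq <;> omega

lemma isVertexIndex_zero : IsVertexIndex 0 0 0 := by
  unfold IsVertexIndex Int.ModEq
  omega

def latticePt (a : ℝ) (m1 m2 m3 : ℤ) : E3 := pt (a * m1) (a * m2) (a * m3)

lemma latticePt_zero (a : ℝ) : latticePt a 0 0 0 = 0 := by
  ext i
  fin_cases i <;> simp [latticePt]

def vertexSet (a : ℝ) : Set E3 :=
  {y | ∃ m1 m2 m3 : ℤ, IsVertexIndex m1 m2 m3 ∧ latticePt a m1 m2 m3 = y}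

lemma mem_vertexSet_iff {a : ℝ} {y : E3} : y ∈ vertexSet a ↔
    ∃ m1 m2 m3 : ℤ, y 0 = a * m1 ∧ y 1 = a * m2 ∧ y 2 = a * m3 ∧ IsVertexIndex m1 m2 m3 := by
  simp only [vertexSet, latticePt, mem_ofPred_eq, eq_comm (b := y), eq_pt_iff]
  tauto

def halfTurn (a : ℝ) (x : E3) : E3 := pt (-(x 2)) (-(x 1) + a) (-(x 0))
def swapXY (x : E3) : E3 := pt (x 1) (x 0) (x 2)
def negX (x : E3) : E3 := pt (-(x 0)) (x 1) (x 2)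
def negZ (x : E3) : E3 := pt (x 0) (x 1) (-(x 2))

section Generators

variable {a : ℝ} {m1 m2 m3 : ℤ}

lemma halfTurn_latticePt :
    halfTurn a (latticePt a m1 m2 m3) = latticePt a (-m3) (1 - m2) (-m1) := by
  simp only [halfTurn, latticePt, eq_pt_iff, pt_apply_zero, pt_apply_one, pt_apply_two]
  push_cast
  refine ⟨?_, ?_, ?_⟩ <;> ring

lemma swapXY_latticePt : swapXY (latticePt a m1 m2 m3) = latticePt a m2 m1 m3 := by
  simp [swapXY, latticePt]

lemma negX_latticePt : negX (latticePt a m1 m2 m3) = latticePt a (-m1) m2 m3 := by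
  simp [negX, latticePt]

lemma negZ_latticePt : negZ (latticePt a m1 m2 m3) = latticePt a m1 m2 (-m3) := by
  simp [negZ, latticePt]

lemma involutive_of_generator {R : E3 → E3}
    (hR : R = halfTurn a ∨ R = swapXY ∨ R = negX ∨ R = negZ) : Involutive R := by
  rcases hR with rfl | rfl | rfl | rfl <;> intro x <;>
    simp [halfTurn, swapXY, negX, negZ]

lemma mapsTo_vertexSet_of_generator {R : E3 → E3}
    (hR : R = halfTurn a ∨ R = swapXY ∨ R = negX ∨ R = negZ) :
    MapsTo R (vertexSet a) (vertexSet a) := by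
  have hV := isVertexIndex_closedUnderMoves
  rintro _ ⟨m1, m2, m3, hm, rfl⟩
  rcases hR with rfl | rfl | rfl | rfl
  · exact ⟨_, _, _, hV.halfTurn hm, halfTurn_latticePt.symm⟩
  · exact ⟨_, _, _, hV.swap hm, swapXY_latticePt.symm⟩
  · exact ⟨_, _, _, hV.neg_fst hm, negX_latticePt.symm⟩
  · exact ⟨_, _, _, hV.neg_thd hm, negZ_latticePt.symm⟩

end Generators

namespace IsometryEquiv

variable {α : Type*} [PseudoEMetricSpace α]

lemma inv_eq_self_of_involutive {g : α ≃ᵢ α} (h : Involutive g) : g⁻¹ = g :=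
  inv_eq_of_mul_eq_one_right (IsometryEquiv.ext h)

lemma mapsTo_of_mem_closure {s : Set (α ≃ᵢ α)} {S : Set α}
    (hs : ∀ g ∈ s, MapsTo g S S ∧ MapsTo ⇑g⁻¹ S S) {g : α ≃ᵢ α}
    (hg : g ∈ Subgroup.closure s) : MapsTo g S S := by
  induction hg using Subgroup.closure_induction'' with
  | mem g hg => exact (hs g hg).1
  | inv_mem g hg => exact (hs g hg).2
  | one => exact mapsTo_id S
  | mul g h _ _ hg hh => exact hg.comp hh

end IsometryEquiv

lemma apply_zero_mem_vertexSet {a : ℝ} {s : Set (E3 ≃ᵢ E3)}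
    (hs : ∀ R ∈ s, ⇑R = halfTurn a ∨ ⇑R = swapXY ∨ ⇑R = negX ∨ ⇑R = negZ)
    {g : E3 ≃ᵢ E3} (hg : g ∈ Subgroup.closure s) : g 0 ∈ vertexSet a := by
  refine IsometryEquiv.mapsTo_of_mem_closure (fun R hR => ?_) hg
    ⟨0, 0, 0, isVertexIndex_zero, latticePt_zero a⟩
  rw [IsometryEquiv.inv_eq_self_of_involutive (involutive_of_generator (hs R hR))]
  exact ⟨mapsTo_vertexSet_of_generator (hs R hR), mapsTo_vertexSet_of_generator (hs R hR)⟩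

lemma latticePt_mem_orbit {a : ℝ} {H : Subgroup (E3 ≃ᵢ E3)} {R0 R1 R2 : E3 ≃ᵢ E3}
    (h0 : R0 ∈ H) (h1 : R1 ∈ H) (h2 : R2 ∈ H)
    (e0 : ⇑R0 = halfTurn a) (e1 : ⇑R1 = swapXY) (e2 : ⇑R2 = negX)
    {m1 m2 m3 : ℤ} (hm : IsVertexIndex m1 m2 m3) : ∃ g ∈ H, g 0 = latticePt a m1 m2 m3 := by
  have step : ∀ R ∈ H, ∀ {y z : E3}, R y = z → (∃ g ∈ H, g 0 = y) → ∃ g ∈ H, g 0 = z :=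
    fun R hR _ _ hz ⟨g, hg, hgy⟩ => ⟨R * g, H.mul_mem hR hg, by rw [← hz, ← hgy]; rfl⟩
  refine ClosedUnderMoves.of_isVertexIndex
    (P := fun m1 m2 m3 => ∃ g ∈ H, g 0 = latticePt a m1 m2 m3)
    ⟨?_, ?_, ?_⟩ ⟨1, H.one_mem, (latticePt_zero a).symm⟩ hm
  · exact step R0 h0 (by rw [e0, halfTurn_latticePt])
  · exact step R1 h1 (by rw [e1, swapXY_latticePt])
  · exact step R2 h2 (by rw [e2, negX_latticePt])

theorem vertex_set_K5_12_general
    (a : ℝ)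
    (R0 R1 R2' R2'' : E3 ≃ᵢ E3)
    (hR0 : ∀ x : E3, R0 x = pt (-(x 2)) (-(x 1) + a) (-(x 0)))
    (hR1 : ∀ x : E3, R1 x = pt (x 1) (x 0) (x 2))
    (hR2' : ∀ x : E3, R2' x = pt (-(x 0)) (x 1) (x 2))
    (hR2'' : ∀ x : E3, R2'' x = pt (x 0) (x 1) (-(x 2))) :
    {y : E3 | ∃ g ∈ Subgroup.closure {R0, R1, R2', R2''}, g 0 = y} =
      {y : E3 | ∃ m1 m2 m3 : ℤ, y 0 = a * m1 ∧ y 1 = a * m2 ∧ y 2 = a * m3 ∧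
        ¬ (Int.ModEq 2 m1 m2 ∧ Int.ModEq 2 m3 (m1 + 1))} := by
  ext y
  refine Iff.trans ?_ mem_vertexSet_iff
  constructor
  · rintro ⟨g, hg, rfl⟩
    refine apply_zero_mem_vertexSet ?_ hg
    simp only [mem_insert_iff, mem_singleton_iff]
    rintro R (rfl | rfl | rfl | rfl)
    exacts [Or.inl (funext hR0), Or.inr (Or.inl (funext hR1)),
      Or.inr (Or.inr (Or.inl (funext hR2'))), Or.inr (Or.inr (Or.inr (funext hR2'')))]
  · rintro ⟨m1, m2, m3, hm, rfl⟩
    exact latticePt_mem_orbit (Subgroup.subset_closure (by simp))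
      (Subgroup.subset_closure (by simp)) (Subgroup.subset_closure (by simp))
      (funext hR0) (funext hR1) (funext hR2') hm

theorem vertex_set_K5_12
    (a : ℝ) (ha : a ≠ 0)
    (R0 R1 R2' R2'' : E3 ≃ᵢ E3)
    (hR0 : ∀ x : E3, R0 x = pt (-(x 2)) (-(x 1) + a) (-(x 0)))
    (hR1 : ∀ x : E3, R1 x = pt (x 1) (x 0) (x 2))
    (hR2' : ∀ x : E3, R2' x = pt (-(x 0)) (x 1) (x 2))
    (hR2'' : ∀ x : E3, R2'' x = pt (x 0) (x 1) (-(x 2))) :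
    {y : E3 | ∃ g ∈ Subgroup.closure {R0, R1, R2', R2''}, g 0 = y} =
      {y : E3 | ∃ m1 m2 m3 : ℤ, y 0 = a * m1 ∧ y 1 = a * m2 ∧ y 2 = a * m3 ∧
        ¬ (Int.ModEq 2 m1 m2 ∧ Int.ModEq 2 m3 (m1 + 1))} :=
  vertex_set_K5_12_general a R0 R1 R2' R2'' hR0 hR1 hR2' hR2''
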